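/- arXiv:2409.00813 — 2 statements merged into one kernel-verified Lean document; each statement's English description precedes it below -/
import Mathlib

section
/- For every integer N ≥ 1 and every complex w ∉ πℤ, the (2N-1)-st derivative of cot satisfies cot^{(2N-1)}(w) = -( E(2N-1, N-1) + 2 ∑_{k=1}^{N-1} E(2N-1, N-k-1) cos(2kw) ) / sin^{2N}(w). -/
open Complex Polynomial Filter

/-- The Eulerian polynomials, defined by the recurrence
`A 0 = 1`, `A (n+1) = (1 + n*X) * A n + X*(1-X) * (A n)'`. -/
noncomputable def eulerianPoly : ℕ → Polynomial ℤ
  | 0 => 1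
  | n + 1 => (1 + Polynomial.C (n : ℤ) * Polynomial.X) * eulerianPoly n
      + Polynomial.X * (1 - Polynomial.X) * Polynomial.derivative (eulerianPoly n)

/-- The Eulerian numbers `E(n,k)`, coefficients of the Eulerian polynomials. -/
noncomputable def eulerianNum (n k : ℕ) : ℤ := (eulerianPoly n).coeff k

/-! With `u = exp (2 i w)` one has `cot w = i (u + 1) / (u - 1)` and `d/dw = 2 i u d/du`. The
Eulerian recurrence says exactly that `d/du (u A_n(u) / (u - 1)^(n+1)) = -A_{n+1}(u) / (u - 1)^(n+2)`,
so `cot^{(n)} w = (-1)^n (2i)^{n+1} u A_n(u) / (u - 1)^(n+1)` for `n ≥ 1`. For `n = 2N - 1` the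
identity `u - 1 = 2 i e^{iw} sin w` turns the denominator into `u^N (2i)^{2N} sin^{2N} w`, and the
palindromy `E(n, k) = E(n, n - 1 - k)` pairs `u^k` with `u^{-k}` into `2 cos (2 k w)`. -/

namespace Polynomial

variable {R : Type*}

theorem coeff_X_mul_derivative [Semiring R] (p : R[X]) (i : ℕ) :
    (X * derivative p).coeff i = i * p.coeff i := by
  cases i with
  | zero => simp
  | succ i => rw [coeff_X_mul, coeff_derivative, Nat.cast_comm]; push_cast; rfl

theorem natDegree_X_mul_derivative_le [Semiring R] (p : R[X]) :
    (X * derivative p).natDegree ≤ p.natDegree :=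
  natDegree_le_iff_coeff_eq_zero.mpr fun i hi => by
    rw [coeff_X_mul_derivative, coeff_eq_zero_of_natDegree_lt hi, mul_zero]

theorem reflect_X_mul_derivative [Ring R] {p : R[X]} {n : ℕ} (hp : p.natDegree ≤ n) :
    reflect n (X * derivative p) = (n : R[X]) * reflect n p - X * derivative (reflect n p) := by
  ext i
  rw [coeff_sub, coeff_X_mul_derivative, coeff_natCast_mul, coeff_reflect, coeff_reflect,
    coeff_X_mul_derivative]
  rcases le_or_gt i n with hi | hi
  · rw [revAt_le hi, Nat.cast_sub hi, sub_mul]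
  · rw [revAt_eq_self_of_lt hi, coeff_eq_zero_of_natDegree_lt (hp.trans_lt hi)]
    simp

end Polynomial

theorem eulerianPoly_succ (n : ℕ) : eulerianPoly (n + 1) =
    (1 + C (n : ℤ) * X) * eulerianPoly n + (1 - X) * (X * derivative (eulerianPoly n)) := by
  rw [eulerianPoly]; ring

theorem eulerianPoly_one : eulerianPoly 1 = 1 := by simp [eulerianPoly]

theorem natDegree_eulerianPoly_succ_le (n : ℕ) : (eulerianPoly (n + 1)).natDegree ≤ n := by
  induction n with
  | zero => simp [eulerianPoly_one]
  | succ n ih =>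
    rw [eulerianPoly_succ]
    refine natDegree_add_le_of_degree_le ?_ ?_ <;> refine (natDegree_mul_le_of_le
      (by compute_degree) ?_).trans_eq (add_comm 1 n)
    exacts [ih, (natDegree_X_mul_derivative_le _).trans ih]

theorem reflect_eulerianPoly_succ (n : ℕ) :
    reflect n (eulerianPoly (n + 1)) = eulerianPoly (n + 1) := by
  induction n with
  | zero => simp [eulerianPoly_one]
  | succ n ih =>
    have hdeg := natDegree_eulerianPoly_succ_le n
    have hmul (f g : ℤ[X]) (hf : f.natDegree ≤ 1) (hg : g.natDegree ≤ n) :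
        reflect (n + 1) (f * g) = reflect 1 f * reflect n g := by
      rw [add_comm n 1]; exact reflect_mul f g hf hg
    have hlin (c : ℤ) : reflect 1 (1 + C c * X) = C c + X := by
      rw [reflect_add, reflect_one, reflect_C_mul, reflect_one_X, pow_one, mul_one, add_comm]
    rw [eulerianPoly_succ (n + 1), reflect_add, hmul _ _ (by compute_degree) hdeg,
      hmul _ _ (by compute_degree) ((natDegree_X_mul_derivative_le _).trans hdeg),
      reflect_X_mul_derivative hdeg, ih, hlin, reflect_sub, reflect_one, reflect_one_X]
    push_cast
    simp only [C_add, C_1, C_eq_natCast]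
    ring

theorem Finset.sum_range_two_mul_add_one {M : Type*} [AddCommMonoid M] (f : ℕ → M) (n : ℕ) :
    ∑ i ∈ range (2 * n + 1), f i = f n + ∑ k ∈ Icc 1 n, (f (n + k) + f (n - k)) := by
  induction n generalizing f with
  | zero => simp
  | succ n ih =>
    rw [show 2 * (n + 1) + 1 = 2 * n + 1 + 1 + 1 by ring, sum_range_succ, sum_range_succ',
      ih fun i => f (i + 1), sum_Icc_succ_top (by omega)]
    have hpair : ∀ k ∈ Icc 1 n, f (n + k + 1) + f (n - k + 1) = f (n + 1 + k) + f (n + 1 - k) :=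
      fun k hk => by rw [(mem_Icc.mp hk).2 |> Nat.sub_add_comm, add_right_comm]
    rw [sum_congr rfl hpair, Nat.sub_self, show n + 1 + (n + 1) = 2 * n + 1 + 1 by ring]
    abel

theorem iteratedDeriv_succ_eqOn_of_hasDerivAt {𝕜 : Type*} [NontriviallyNormedField 𝕜] {F : Type*}
    [NormedAddCommGroup F] [NormedSpace 𝕜 F] {f : 𝕜 → F} {g : ℕ → 𝕜 → F} {s : Set 𝕜}
    (hs : IsOpen s) (hf : ∀ x ∈ s, HasDerivAt f (g 0 x) x)
    (hg : ∀ n, ∀ x ∈ s, HasDerivAt (g n) (g (n + 1) x) x) (n : ℕ) :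
    Set.EqOn (iteratedDeriv (n + 1) f) (g n) s := by
  induction n with
  | zero => exact fun x hx => by rw [iteratedDeriv_one, (hf x hx).deriv]
  | succ n ih =>
    intro x hx
    rw [iteratedDeriv_succ, (ih.eventuallyEq_of_mem (hs.mem_nhds hx)).deriv_eq, (hg n x hx).deriv]

section EulerianFrac

variable {𝕜 : Type*}

noncomputable def eulerianFrac [Field 𝕜] (n : ℕ) (u : 𝕜) : 𝕜 :=
  u * aeval u (eulerianPoly n) / (u - 1) ^ (n + 1)

theorem hasDerivAt_eulerianFrac [NontriviallyNormedField 𝕜] (n : ℕ) {u : 𝕜} (hu : u ≠ 1) :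
    HasDerivAt (eulerianFrac n) (-aeval u (eulerianPoly (n + 1)) / (u - 1) ^ (n + 2)) u := by
  have hu' : u - 1 ≠ 0 := sub_ne_zero.mpr hu
  refine (((hasDerivAt_id' u).mul ((eulerianPoly n).hasDerivAt_aeval u)).div
    (((hasDerivAt_id' u).sub_const 1).pow (n + 1)) (pow_ne_zero _ hu')).congr_deriv ?_
  rw [eulerianPoly_succ]
  simp only [map_add, map_mul, map_sub, map_one, map_natCast, aeval_X, Pi.mul_apply,
    Pi.pow_apply, Nat.add_sub_cancel, Nat.cast_succ]
  field_simp
  ring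

end EulerianFrac

theorem hasDerivAt_eulerianFrac_exp (n : ℕ) {w : ℂ} (hw : cexp (2 * I * w) ≠ 1) :
    HasDerivAt (fun w => (-1) ^ n * (2 * I) ^ (n + 1) * eulerianFrac n (cexp (2 * I * w)))
      ((-1) ^ (n + 1) * (2 * I) ^ (n + 2) * eulerianFrac (n + 1) (cexp (2 * I * w))) w := by
  have hexp : HasDerivAt (fun w => cexp (2 * I * w)) (cexp (2 * I * w) * (2 * I)) w := by
    simpa using ((hasDerivAt_id w).const_mul (2 * I)).cexp
  refine (((hasDerivAt_eulerianFrac n hw).comp w hexp).const_mul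
    ((-1) ^ n * (2 * I) ^ (n + 1))).congr_deriv ?_
  unfold eulerianFrac
  field_simp
  ring

theorem cot_eq_eulerianFrac_zero {w : ℂ} (hw : cexp (2 * I * w) ≠ 1) :
    cot w = 2 * I * eulerianFrac 0 (cexp (2 * I * w)) - I := by
  have hw' : 1 - cexp (2 * I * w) ≠ 0 := sub_ne_zero.mpr hw.symm
  rw [cot_eq_exp_ratio, eulerianFrac, eulerianPoly, map_one]
  field_simp
  linear_combination (cexp (2 * I * w) ^ 2 - 1) * I_sq

theorem iteratedDeriv_cot (n : ℕ) {w : ℂ} (hw : cexp (2 * I * w) ≠ 1) :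
    iteratedDeriv (n + 1) cot w =
      (-1) ^ (n + 1) * (2 * I) ^ (n + 2) * eulerianFrac (n + 1) (cexp (2 * I * w)) := by
  have hs : IsOpen {w : ℂ | cexp (2 * I * w) ≠ 1} := isOpen_ne_fun (by fun_prop) (by fun_prop)
  refine iteratedDeriv_succ_eqOn_of_hasDerivAt hs (fun x hx => ?_)
    (fun n x hx => hasDerivAt_eulerianFrac_exp (n + 1) hx) n hw
  have hcot : cot =ᶠ[nhds x]
      fun w => (-1) ^ 0 * (2 * I) ^ (0 + 1) * eulerianFrac 0 (cexp (2 * I * w)) - I :=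
    eventually_of_mem (hs.mem_nhds hx) fun w hw => by simpa using cot_eq_eulerianFrac_zero hw
  exact ((hasDerivAt_eulerianFrac_exp 0 hx).sub_const I).congr_of_eventuallyEq hcot

theorem exp_two_mul_I_mul_sub_one (w : ℂ) :
    cexp (2 * I * w) - 1 = cexp (I * w) * (2 * I * sin w) := by
  have hinv : cexp (I * w) * cexp (-(I * w)) = 1 := by rw [← exp_add, add_neg_cancel, exp_zero]
  rw [sin, show 2 * I * w = I * w + I * w by ring, exp_add, show -w * I = -(I * w) by ring,
    mul_comm w I]
  linear_combination hinv + (cexp (I * w) ^ 2 - cexp (I * w) * cexp (-(I * w))) * I_sq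

theorem aeval_exp_two_mul_I_mul_of_reflect_eq {R : Type*} [CommSemiring R] [Algebra R ℂ]
    {p : R[X]} {M : ℕ} (hdeg : p.natDegree ≤ 2 * M) (hp : reflect (2 * M) p = p) (w : ℂ) :
    aeval (cexp (2 * I * w)) p = cexp (2 * I * w) ^ M * (algebraMap R ℂ (p.coeff M) +
      2 * ∑ k ∈ Finset.Icc 1 M, algebraMap R ℂ (p.coeff (M - k)) * cos (2 * k * w)) := by
  rw [aeval_eq_sum_range' (Nat.lt_succ_of_le hdeg), Finset.sum_range_two_mul_add_one, mul_add,
    Finset.mul_sum, Finset.mul_sum, Algebra.smul_def, mul_comm]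
  refine congrArg _ (Finset.sum_congr rfl fun k hk => ?_)
  have hkM : k ≤ M := (Finset.mem_Icc.mp hk).2
  have hsymm : p.coeff (M + k) = p.coeff (M - k) := by
    conv_lhs => rw [← hp]
    rw [coeff_reflect, revAt_le (by omega), show 2 * M - (M + k) = M - k by omega]
  have hcos : 2 * cos (2 * k * w) = cexp (2 * I * w) ^ k + (cexp (2 * I * w) ^ k)⁻¹ := by
    rw [cos, ← exp_nat_mul, ← exp_neg, show (k : ℂ) * (2 * I * w) = 2 * k * w * I by ring]
    ring_nf
  rw [Algebra.smul_def, Algebra.smul_def, hsymm, pow_add, pow_sub₀ _ (exp_ne_zero _) hkM]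
  linear_combination (-(algebraMap R ℂ (p.coeff (M - k)) * cexp (2 * I * w) ^ M)) * hcos

theorem eulerianFrac_exp_two_mul_add_one (M : ℕ) (w : ℂ) :
    (-1) ^ (2 * M + 1) * (2 * I) ^ (2 * M + 2) * eulerianFrac (2 * M + 1) (cexp (2 * I * w)) =
      -(((eulerianNum (2 * M + 1) M : ℂ) + 2 * ∑ k ∈ Finset.Icc 1 M,
        (eulerianNum (2 * M + 1) (M - k) : ℂ) * cos (2 * k * w)) / sin w ^ (2 * M + 2)) := by
  have hp := aeval_exp_two_mul_I_mul_of_reflect_eq (natDegree_eulerianPoly_succ_le (2 * M))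
    (reflect_eulerianPoly_succ (2 * M)) w
  rw [(odd_two_mul_add_one M).neg_one_pow, eulerianFrac, hp, exp_two_mul_I_mul_sub_one,
    show 2 * I * w = I * w + I * w by ring, exp_add]
  unfold eulerianNum
  simp only [algebraMap_int_eq, eq_intCast]
  rcases eq_or_ne (sin w) 0 with hs | hs
  · simp [hs]
  · field_simp
    ring

theorem cot_iteratedDeriv_odd (N : ℕ) (hN : 1 ≤ N) (w : ℂ)
    (hw : ∀ k : ℤ, w ≠ (k : ℂ) * Real.pi) :
    iteratedDeriv (2 * N - 1) Complex.cot w =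
      -(((eulerianNum (2 * N - 1) (N - 1) : ℂ) +
          2 * ∑ k ∈ Finset.Icc 1 (N - 1),
            (eulerianNum (2 * N - 1) (N - k - 1) : ℂ) * Complex.cos (2 * (k : ℂ) * w)) /
        Complex.sin w ^ (2 * N)) := by
  obtain ⟨M, rfl⟩ : ∃ M, N = M + 1 := ⟨N - 1, by omega⟩
  have hu : cexp (2 * I * w) ≠ 1 := by
    rw [Ne, exp_eq_one_iff]
    rintro ⟨k, hk⟩
    exact hw k (mul_left_cancel₀ (mul_ne_zero two_ne_zero I_ne_zero) (by linear_combination hk))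
  have hsum : ∀ k ∈ Finset.Icc 1 M, M + 1 - k - 1 = M - k := fun k _ => by omega
  rw [show 2 * (M + 1) - 1 = 2 * M + 1 by omega, show 2 * (M + 1) = 2 * M + 2 by ring,
    Nat.add_sub_cancel, Finset.sum_congr rfl fun k hk => by rw [hsum k hk],
    iteratedDeriv_cot (2 * M) hu, eulerianFrac_exp_two_mul_add_one]
end

section
/- The limit as w → 0 (w real, w ≠ 0) of (2iπ)^{2p+1} e^{2iπw} A_{2p}(e^{2iπw}) / (1 - e^{2iπw})^{2p+1} + (2p)!/w^{2p+1} equals 0, for every integer p ≥ 1. -/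
/-!
With `f z = exp z / (1 - exp z) + 1 / z`, the Eulerian recurrence says that
`f⁽ⁿ⁾ z = exp z A_n(exp z) / (1 - exp z)^(n+1) + (-1)^n n! / z^(n+1)`, so after the
substitution `z = 2πi w` the function in the limit is `(2πi)^(2p+1) f⁽²ᵖ⁾(z)`. The
singularity of `f` at `0` is removable and `f z + f (-z) = -1`, so `f + 1/2` is odd and its
derivatives of positive even order vanish at `0`.
-/

open Complex Polynomial Filter

open Topology
open scoped Nat

lemma aeval_eulerianPoly_succ {R : Type*} [CommRing R] (n : ℕ) (t : R) :
    aeval t (eulerianPoly (n + 1)) = (1 + n * t) * aeval t (eulerianPoly n)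
      + t * (1 - t) * aeval t (derivative (eulerianPoly n)) := by
  simp [eulerianPoly]

/-- Differentiating `t ↦ t A_n(t) / (1 - t)^(n+1)` is exactly the Eulerian recurrence. -/
lemma hasDerivAt_mul_aeval_eulerianPoly_div_one_sub_pow {𝕜 : Type*}
    [NontriviallyNormedField 𝕜] (n : ℕ) {t : 𝕜} (ht : t ≠ 1) :
    HasDerivAt (fun t => t * aeval t (eulerianPoly n) / (1 - t) ^ (n + 1))
      (aeval t (eulerianPoly (n + 1)) / (1 - t) ^ (n + 2)) t := by
  have h1t : 1 - t ≠ 0 := sub_ne_zero.2 ht.symm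
  have hnum := (hasDerivAt_id t).mul (Polynomial.hasDerivAt_aeval (eulerianPoly n) t)
  have hden := ((hasDerivAt_id t).const_sub 1).pow (n + 1)
  refine (hnum.div hden (pow_ne_zero _ h1t)).congr_deriv ?_
  rw [aeval_eulerianPoly_succ]
  simp only [Pi.mul_apply, Pi.pow_apply, id, Nat.add_sub_cancel]
  push_cast
  field_simp
  ring

lemma iteratedDeriv_exp_div_one_sub_exp (n : ℕ) {z : ℂ} (hz : exp z ≠ 1) :
    iteratedDeriv n (fun z => exp z / (1 - exp z)) z =
      exp z * aeval (exp z) (eulerianPoly n) / (1 - exp z) ^ (n + 1) := by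
  induction n generalizing z with
  | zero => simp [eulerianPoly]
  | succ n ih =>
    have heq : iteratedDeriv n (fun z => exp z / (1 - exp z)) =ᶠ[𝓝 z]
        fun w => exp w * aeval (exp w) (eulerianPoly n) / (1 - exp w) ^ (n + 1) := by
      filter_upwards [continuous_exp.continuousAt.eventually_ne hz] with w hw using ih hw
    rw [iteratedDeriv_succ, heq.deriv_eq]
    exact ((hasDerivAt_mul_aeval_eulerianPoly_div_one_sub_pow n hz).comp z
      (hasDerivAt_exp z)).deriv.trans (by ring)

lemma iteratedDeriv_exp_div_one_sub_exp_add_inv (n : ℕ) {z : ℂ} (hz0 : z ≠ 0)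
    (hz : exp z ≠ 1) :
    iteratedDeriv n (fun z => exp z / (1 - exp z) + z⁻¹) z =
      exp z * aeval (exp z) (eulerianPoly n) / (1 - exp z) ^ (n + 1)
        + (-1) ^ n * n ! / z ^ (n + 1) := by
  have hexp : ContDiffAt ℂ n (fun z => exp z / (1 - exp z)) z :=
    (analyticAt_cexp.div (analyticAt_const.sub analyticAt_cexp)
      (sub_ne_zero.2 hz.symm)).contDiffAt
  rw [iteratedDeriv_fun_add hexp (contDiffAt_inv ℂ hz0), iteratedDeriv_exp_div_one_sub_exp n hz,
    iteratedDeriv_eq_iterate, iter_deriv_inv, show (-1 - n : ℤ) = -↑(n + 1) by push_cast; ring,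
    zpow_neg, zpow_natCast, div_eq_mul_inv _ (z ^ (n + 1))]

lemma AnalyticAt.dslope {𝕜 E : Type*} [NontriviallyNormedField 𝕜] [NormedAddCommGroup E]
    [NormedSpace 𝕜 E] {f : 𝕜 → E} {a : 𝕜} (hf : AnalyticAt 𝕜 f a) :
    AnalyticAt 𝕜 (dslope f a) a := by
  obtain ⟨p, hp⟩ := hf
  exact ⟨_, hp.has_fpower_series_dslope_fslope⟩

lemma iteratedDeriv_eq_zero_of_odd {𝕜 F : Type*} [NontriviallyNormedField 𝕜] [CharZero 𝕜]
    [NormedAddCommGroup F] [NormedSpace 𝕜 F] {f : 𝕜 → F}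
    (hf : (fun x => f (-x)) =ᶠ[𝓝 0] fun x => -f x) {n : ℕ} (hn : Even n) :
    iteratedDeriv n f 0 = 0 := by
  have h := hf.iteratedDeriv_eq n
  rw [iteratedDeriv_comp_neg, iteratedDeriv_fun_neg, hn.neg_one_pow, one_smul, neg_zero] at h
  have h2 : (2 : 𝕜) • iteratedDeriv n f 0 = 0 := by
    rw [two_smul]
    nth_rewrite 2 [h]
    exact add_neg_cancel _
  exact (smul_eq_zero.1 h2).resolve_left two_ne_zero

lemma eventually_exp_ne_one : ∀ᶠ z in 𝓝[≠] (0 : ℂ), exp z ≠ 1 := by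
  simpa using (hasDerivAt_exp 0).eventually_ne (c := 1) (by simp)

lemma exp_neg_div_one_sub_exp_neg {z : ℂ} (hz0 : z ≠ 0) (hz : exp z ≠ 1) :
    exp (-z) / (1 - exp (-z)) + (-z)⁻¹ = -1 - (exp z / (1 - exp z) + z⁻¹) := by
  have h1 : 1 - exp z ≠ 0 := sub_ne_zero.2 hz.symm
  have h2 : exp z - 1 ≠ 0 := sub_ne_zero.2 hz
  rw [exp_neg]
  field_simp
  ring

/-- The pole of `exp z / (1 - exp z)` at `0` is cancelled by `z⁻¹`: writing
`exp z - 1 = z q(z)` and `q(z) - exp z = z r(z)`, the sum equals `r / q`. -/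
lemma exists_analyticAt_eventuallyEq_exp_div_one_sub_exp_add_inv :
    ∃ U : ℂ → ℂ, AnalyticAt ℂ U 0 ∧ U =ᶠ[𝓝[≠] 0] fun z => exp z / (1 - exp z) + z⁻¹ := by
  set q := dslope (fun z => exp z - 1) 0
  set r := dslope (fun z => q z - exp z) 0
  have hq : AnalyticAt ℂ q 0 := (analyticAt_cexp.sub analyticAt_const).dslope
  have hq0 : q 0 = 1 := by simp [q, dslope_same]
  refine ⟨fun z => r z / q z, (hq.sub analyticAt_cexp).dslope.div hq (by simp [hq0]), ?_⟩
  have hq_ne : ∀ᶠ z in 𝓝[≠] 0, q z ≠ 0 := eventually_nhdsWithin_of_eventually_nhds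
    (hq.continuousAt.eventually_ne (show q 0 ≠ 0 by simp [hq0]))
  filter_upwards [self_mem_nhdsWithin, hq_ne] with z (hz : z ≠ 0) hqz
  have h1 : exp z - 1 = z * q z := by
    simpa using (sub_smul_dslope (fun z => exp z - 1) 0 z).symm
  have h2 : q z - exp z = z * r z := by
    simpa [hq0] using (sub_smul_dslope (fun z => q z - exp z) 0 z).symm
  rw [show 1 - exp z = -(z * q z) by linear_combination -h1]
  field_simp
  linear_combination -h2

lemma tendsto_exp_eulerianPoly_add_factorial_div_pow {n : ℕ} (hn : Even n) (hn0 : n ≠ 0) :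
    Tendsto (fun z : ℂ => exp z * aeval (exp z) (eulerianPoly n) / (1 - exp z) ^ (n + 1)
      + n ! / z ^ (n + 1)) (𝓝[≠] 0) (𝓝 0) := by
  obtain ⟨U, hU, hUeq⟩ := exists_analyticAt_eventuallyEq_exp_div_one_sub_exp_add_inv
  have hUneg : (fun z => U (-z)) =ᶠ[𝓝[≠] 0] fun z => -1 - U z := by
    have hneg : Tendsto Neg.neg (𝓝[≠] (0 : ℂ)) (𝓝[≠] 0) := by
      simpa using (hasDerivAt_neg (0 : ℂ)).tendsto_nhdsNE (by simp)
    filter_upwards [hUeq, hneg.eventually hUeq, self_mem_nhdsWithin, eventually_exp_ne_one]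
      with z hUz hUz' hz0 hz1
    rw [hUz', hUz, exp_neg_div_one_sub_exp_neg hz0 hz1]
  have hodd : (fun z => 1 / 2 + U (-z)) =ᶠ[𝓝 0] fun z => -(1 / 2 + U z) := by
    have hUneg_an : AnalyticAt ℂ (fun z => U (-z)) 0 :=
      hU.comp_of_eq analyticAt_id.neg neg_zero
    refine ((analyticAt_const.add hUneg_an).frequently_eq_iff_eventually_eq
      (analyticAt_const.add hU).neg).1 (hUneg.mono fun z hz => ?_).frequently
    simp only [Pi.add_apply, Pi.neg_apply] at hz ⊢
    rw [hz]
    ring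
  have hzero : iteratedDeriv n U 0 = 0 := by
    rw [← iteratedDeriv_const_add (Nat.pos_of_ne_zero hn0) (1 / 2 : ℂ)]
    exact iteratedDeriv_eq_zero_of_odd (f := fun z => 1 / 2 + U z) hodd hn
  have hcont : ContinuousAt (iteratedDeriv n U) 0 := by
    rw [iteratedDeriv_eq_iterate]
    exact (hU.iterated_deriv n).continuousAt
  refine (hzero ▸ hcont.continuousWithinAt.tendsto).congr' ?_
  filter_upwards [eventually_nhdsNE_eventually_nhds_iff.2 hUeq, self_mem_nhdsWithin,
    eventually_exp_ne_one] with z hUz hz0 hz1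
  rw [Filter.EventuallyEq.iteratedDeriv_eq n hUz,
    iteratedDeriv_exp_div_one_sub_exp_add_inv n hz0 hz1, hn.neg_one_pow, one_mul]

theorem limit_odd_case_eq_zero (p : ℕ) (hp : 1 ≤ p) :
    Filter.Tendsto
      (fun w : ℝ =>
        (2 * Complex.I * Real.pi) ^ (2 * p + 1) *
            Complex.exp (2 * Complex.I * Real.pi * w) *
            Polynomial.aeval (Complex.exp (2 * Complex.I * Real.pi * w)) (eulerianPoly (2 * p)) /
            (1 - Complex.exp (2 * Complex.I * Real.pi * w)) ^ (2 * p + 1)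
          + (Nat.factorial (2 * p) : ℂ) / (w : ℂ) ^ (2 * p + 1))
      (nhdsWithin 0 {0}ᶜ) (nhds 0) := by
  set c : ℂ := 2 * I * Real.pi
  have hc : c ≠ 0 := by simp [c, Real.pi_ne_zero, I_ne_zero]
  have hscale : Tendsto (fun w : ℝ => c * w) (𝓝[≠] 0) (𝓝[≠] 0) :=
    tendsto_nhdsWithin_iff.2 ⟨(Continuous.tendsto' (by fun_prop) 0 0 (by simp)).mono_left
      nhdsWithin_le_nhds, eventually_nhdsWithin_of_forall fun w hw => mul_ne_zero hc (by simpa)⟩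
  have h := ((tendsto_exp_eulerianPoly_add_factorial_div_pow (even_two_mul p) (by omega)).comp
    hscale).const_mul (c ^ (2 * p + 1))
  rw [mul_zero] at h
  refine h.congr' (eventually_nhdsWithin_of_forall fun w (hw : w ≠ 0) => ?_)
  have hw' : (w : ℂ) ≠ 0 := by simpa
  simp only [Function.comp_apply, mul_pow]
  field_simp
end
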